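/- Assume α < 1/(4n), D_t = 1, and let 0 ≤ Z_1 < Z_2 satisfy n·Z_2 < 1/4 and β·Z_2 ≥ 2. Suppose there exists a node i_1 with |s_{i_1}(t)| ∈ [(1 − Z_2)·M(t), (1 − Z_1)·M(t)]. Then, for every realization of the neighbor sets and of B_t ∈ {0,1}, at least one of the following holds after one step of the state-flipping update: (H1) M(t+1) ≥ M(t)/4, or (H2) there exists a node i_2 with |s_{i_2}(t)| ∈ [(1 − n·Z_2)·M(t), (1 − Z_2)·M(t)]. -/

import Mathlib

/-!
Assume the band `[(1 - n Z₂) M, (1 - Z₂) M]` contains no `|s j|`, so every node is either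
small (`|s j| < (1 - n Z₂) M`) or big (`|s j| > (1 - Z₂) M`), and let `m` be a big node of least modulus; say `s m > 0`. A flipping neighbour
`j` of `m` contributes `s m + s j ∈ [-Z₂ M, 0]` if it is big and negative (by minimality of
`|s m|`), and at least `(n - 1) Z₂ M` otherwise. Since `m` has at most `n - 1` flipping
neighbours, either all contributions are non-positive, and the flip pushes `s m` away from
zero, or their sum is at least `Z₂ M`, and since `β Z₂ ≥ 2` the flip throws `s m` past zero
to below `-M`. Either way the flipped state has modulus at least `3M/4`, while the attraction
term moves it by at most `2 n α M < M/2`.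
-/

/-- The maximum absolute state `M = max_{i ∈ V} |x i|`. -/
noncomputable def Mmax {n : ℕ} (hn : 3 ≤ n) (x : Fin n → ℝ) : ℝ :=
  Finset.univ.sup' ⟨⟨0, by omega⟩, Finset.mem_univ _⟩ fun i => |x i|

lemma abs_le_Mmax {n : ℕ} (hn : 3 ≤ n) (x : Fin n → ℝ) (i : Fin n) : |x i| ≤ Mmax hn x :=
  Finset.le_sup' (fun i => |x i|) (Finset.mem_univ i)

lemma Mmax_nonneg {n : ℕ} (hn : 3 ≤ n) (x : Fin n → ℝ) : 0 ≤ Mmax hn x :=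
  (abs_nonneg _).trans (abs_le_Mmax hn x ⟨0, by omega⟩)

lemma exists_abs_eq_Mmax {n : ℕ} (hn : 3 ≤ n) (x : Fin n → ℝ) :
    ∃ i, |x i| = Mmax hn x := by
  obtain ⟨i, -, hi⟩ := Finset.exists_mem_eq_sup' _ (fun i => |x i|)
  exact ⟨i, hi.symm⟩

lemma flip_term_dichotomy {a b M Z K : ℝ} (hM : 0 ≤ M) (hKZ : (K + 1) * Z ≤ 2)
    (ha : (1 - Z) * M < a) (hb : |b| ≤ M)
    (hgap : |b| < (1 - K * Z) * M ∨ (1 - Z) * M < |b|)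
    (hmin : (1 - Z) * M < |b| → a ≤ |b|) :
    (-(Z * M) ≤ a + b ∧ a + b ≤ 0) ∨ (K - 1) * (Z * M) ≤ a + b := by
  rcases hgap with hsmall | hbig
  · right
    linarith [neg_abs_le b]
  · have hab := hmin hbig
    rcases abs_cases b with ⟨hb_eq, -⟩ | ⟨hb_eq, -⟩ <;> rw [hb_eq] at hb hbig hab
    · right
      nlinarith [mul_le_mul_of_nonneg_right hKZ hM]
    · left
      constructor <;> linarith

lemma sum_nonpos_or_le_sum {ι : Type*} (N : Finset ι) (f : ι → ℝ) {c K : ℝ} (hc : 0 ≤ c)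
    (hN : (N.card : ℝ) + 1 ≤ K)
    (hf : ∀ j ∈ N, (-c ≤ f j ∧ f j ≤ 0) ∨ (K - 1) * c ≤ f j) :
    ∑ j ∈ N, f j ≤ 0 ∨ c ≤ ∑ j ∈ N, f j := by
  classical
  by_cases hlarge : ∃ j₀ ∈ N, (K - 1) * c ≤ f j₀
  · right
    obtain ⟨j₀, hj₀, hfj₀⟩ := hlarge
    have hK : 1 ≤ K := by linarith [(N.card.cast_nonneg : (0 : ℝ) ≤ N.card)]
    have hlow : ∀ j ∈ N.erase j₀, -c ≤ f j := fun j hj => by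
      rcases hf j (Finset.mem_of_mem_erase hj) with h | h
      · exact h.1
      · nlinarith
    have hrest := Finset.card_nsmul_le_sum _ _ _ hlow
    rw [Finset.card_erase_of_mem hj₀, nsmul_eq_mul,
      Nat.cast_pred (Finset.card_pos.mpr ⟨j₀, hj₀⟩)] at hrest
    rw [← Finset.add_sum_erase N f hj₀]
    nlinarith [mul_le_mul_of_nonneg_right hN hc]
  · left
    push Not at hlarge
    exact Finset.sum_nonpos fun j hj => ((hf j hj).resolve_right (hlarge j hj).not_ge).2

lemma three_quarters_le_abs_sub_flip {ι : Type*} (s : ι → ℝ) (N : Finset ι) (m : ι)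
    {M Z K β : ℝ} (hN : (N.card : ℝ) + 1 ≤ K) (hKZ : K * Z ≤ 1 / 4) (hβ : 0 ≤ β)
    (hβZ : 2 ≤ β * Z) (hsm : |s m| ≤ M) (hbig : (1 - Z) * M < |s m|)
    (hs : ∀ j ∈ N, |s j| ≤ M)
    (hgap : ∀ j ∈ N, |s j| < (1 - K * Z) * M ∨ (1 - Z) * M < |s j|)
    (hmin : ∀ j ∈ N, (1 - Z) * M < |s j| → |s m| ≤ |s j|) :
    3 * M / 4 ≤ |s m - β * ∑ j ∈ N, (s m + s j)| := by
  wlog hpos : 0 ≤ s m generalizing s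
  · have key := this (-s) (by simpa using hsm) (by simpa using hbig) (by simpa using hs)
      (by simpa using hgap) (by simpa using hmin) (by simp; linarith)
    simp only [Pi.neg_apply] at key
    rwa [show -s m - β * ∑ j ∈ N, (-s m + -s j) = -(s m - β * ∑ j ∈ N, (s m + s j)) by
      simp only [← neg_add, Finset.sum_neg_distrib]; ring, abs_neg] at key
  rw [abs_of_nonneg hpos] at hsm hbig hmin
  have hZ : 0 < Z := by nlinarith
  have hM : 0 ≤ M := hpos.trans hsm
  have hK : 1 ≤ K := by linarith [(N.card.cast_nonneg : (0 : ℝ) ≤ N.card)]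
  rcases sum_nonpos_or_le_sum N (fun j => s m + s j) (mul_nonneg hZ.le hM) hN
      fun j hj => flip_term_dichotomy hM (by nlinarith) hbig (hs j hj) (hgap j hj) (hmin j hj)
    with hnonpos | hlarge
  · calc 3 * M / 4 ≤ s m - β * ∑ j ∈ N, (s m + s j) := by
          nlinarith [mul_nonpos_of_nonneg_of_nonpos hβ hnonpos]
      _ ≤ _ := le_abs_self _
  · calc 3 * M / 4 ≤ -(s m - β * ∑ j ∈ N, (s m + s j)) := by
          nlinarith [mul_le_mul_of_nonneg_left hlarge hβ, mul_le_mul_of_nonneg_right hβZ hM]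
      _ ≤ _ := neg_le_abs _

lemma abs_attraction_le {ι : Type*} (s : ι → ℝ) (N : Finset ι) (i : ι) {M α B K : ℝ}
    (hα : 0 ≤ α) (hB : |B| ≤ 1) (hN : (N.card : ℝ) ≤ K) (hαK : 4 * α * K ≤ 1)
    (hsi : |s i| ≤ M) (hs : ∀ j ∈ N, |s j| ≤ M) :
    |α * B * ∑ j ∈ N, (s i - s j)| ≤ M / 2 := by
  have hM : 0 ≤ M := (abs_nonneg _).trans hsi
  have hsum : |∑ j ∈ N, (s i - s j)| ≤ K * (2 * M) :=
    calc |∑ j ∈ N, (s i - s j)| ≤ ∑ j ∈ N, |s i - s j| := Finset.abs_sum_le_sum_abs _ _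
      _ ≤ N.card • (2 * M) := Finset.sum_le_card_nsmul _ _ _ fun j hj =>
          (abs_sub _ _).trans (by linarith [hs j hj])
      _ ≤ K * (2 * M) := by rw [nsmul_eq_mul]; gcongr
  rw [abs_mul, abs_mul, abs_of_nonneg hα]
  calc α * |B| * |∑ j ∈ N, (s i - s j)| ≤ α * 1 * (K * (2 * M)) := by gcongr
    _ ≤ M / 2 := by nlinarith [mul_le_mul_of_nonneg_right hαK hM]

theorem state_flipping_claim_dichotomy_general
    {n : ℕ} (hn : 3 ≤ n)
    (α β : ℝ) (hα : 0 < α) (hβ : 0 < β)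
    (hα4n : α < 1 / (4 * (n : ℝ)))
    (Np Nd : Fin n → Finset (Fin n))
    (hNd : ∀ i, i ∉ Nd i)
    (B D : ℝ) (hB : B = 0 ∨ B = 1) (hD : D = 1)
    (Z₂ : ℝ)
    (hZ₂n : (n : ℝ) * Z₂ < 1 / 4) (hβZ₂ : β * Z₂ ≥ 2)
    (s s' : Fin n → ℝ)
    (hupd : ∀ i, s' i = s i - α * B * (∑ j ∈ Np i, (s i - s j))
        - β * D * (∑ j ∈ Nd i, (s i + s j))) :
    Mmax hn s / 4 ≤ Mmax hn s' ∨
      ∃ i₂ : Fin n, (1 - (n : ℝ) * Z₂) * Mmax hn s ≤ |s i₂| ∧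
        |s i₂| ≤ (1 - Z₂) * Mmax hn s := by
  set M := Mmax hn s
  by_cases hband : ∃ i₂ : Fin n, (1 - (n : ℝ) * Z₂) * M ≤ |s i₂| ∧ |s i₂| ≤ (1 - Z₂) * M
  · exact Or.inr hband
  push Not at hband
  left
  rcases (Mmax_nonneg hn s).eq_or_lt with hM0 | hMpos
  · rw [show M = 0 from hM0.symm, zero_div]; exact Mmax_nonneg hn s'
  have hZ₂ : 0 < Z₂ := by nlinarith
  obtain ⟨i, hi⟩ := exists_abs_eq_Mmax hn s
  obtain ⟨m, hbig, hmin⟩ := Set.exists_min_image {j | (1 - Z₂) * M < |s j|} (fun j => |s j|)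
    (Set.toFinite _) ⟨i, show (1 - Z₂) * M < |s i| by rw [hi]; nlinarith⟩
  have hNdm : ((Nd m).card : ℝ) + 1 ≤ n := by
    exact_mod_cast (Finset.card_lt_univ_of_notMem (hNd m)).trans_eq (Fintype.card_fin n)
  have hflip := three_quarters_le_abs_sub_flip s (Nd m) m hNdm hZ₂n.le hβ.le hβZ₂
    (abs_le_Mmax hn s m) hbig (fun j _ => abs_le_Mmax hn s j)
    (fun j _ => (lt_or_ge _ _).imp_right (hband j)) (fun j _ => hmin j)
  have hB1 : |B| ≤ 1 := by rcases hB with rfl | rfl <;> norm_num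
  have hattr := abs_attraction_le s (Np m) m (K := n) hα.le hB1
    (by exact_mod_cast (Np m).card_le_univ.trans_eq (Fintype.card_fin n))
    (by rw [lt_div_iff₀ (by positivity)] at hα4n; linarith)
    (abs_le_Mmax hn s m) (fun j _ => abs_le_Mmax hn s j)
  calc M / 4 ≤ |s' m| := by
        have hs'm : s' m = (s m - β * ∑ j ∈ Nd m, (s m + s j))
            - α * B * ∑ j ∈ Np m, (s m - s j) := by
          rw [hupd m, hD]; ring
        rw [hs'm]
        linarith [abs_sub_abs_le_abs_sub (s m - β * ∑ j ∈ Nd m, (s m + s j))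
          (α * B * ∑ j ∈ Np m, (s m - s j))]
    _ ≤ Mmax hn s' := abs_le_Mmax hn s' m

/-- suppose `α < 1/(4n)`, `D_t = 1`, `0 ≤ Z₁ < Z₂`, `n·Z₂ < 1/4`,
`β·Z₂ ≥ 2`, and there is a node `i₁` with `|s_{i₁}(t)| ∈ [(1-Z₂)M(t), (1-Z₁)M(t)]`.
Then either `M(t+1) ≥ M(t)/4`, or there exists a node `i₂` with
`|s_{i₂}(t)| ∈ [(1-n·Z₂)M(t), (1-Z₂)M(t)]`. -/
theorem state_flipping_claim_dichotomy
    {n : ℕ} (hn : 3 ≤ n)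
    (α β : ℝ) (hα : 0 < α) (hβ : 0 < β)
    (hα4n : α < 1 / (4 * (n : ℝ)))
    (Np Nd : Fin n → Finset (Fin n))
    (hNp : ∀ i, i ∉ Np i) (hNd : ∀ i, i ∉ Nd i)
    (hdisj : ∀ i, Disjoint (Np i) (Nd i))
    (B D : ℝ) (hB : B = 0 ∨ B = 1) (hD : D = 1)
    (Z₁ Z₂ : ℝ) (hZ₁ : 0 ≤ Z₁) (hZ₁₂ : Z₁ < Z₂)
    (hZ₂n : (n : ℝ) * Z₂ < 1 / 4) (hβZ₂ : β * Z₂ ≥ 2)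
    (s s' : Fin n → ℝ)
    (i₁ : Fin n)
    (hi₁l : (1 - Z₂) * Mmax hn s ≤ |s i₁|) (hi₁u : |s i₁| ≤ (1 - Z₁) * Mmax hn s)
    (hupd : ∀ i, s' i = s i - α * B * (∑ j ∈ Np i, (s i - s j))
        - β * D * (∑ j ∈ Nd i, (s i + s j))) :
    Mmax hn s / 4 ≤ Mmax hn s' ∨
      ∃ i₂ : Fin n, (1 - (n : ℝ) * Z₂) * Mmax hn s ≤ |s i₂| ∧
        |s i₂| ≤ (1 - Z₂) * Mmax hn s :=
  state_flipping_claim_dichotomy_general hn α β hα hβ hα4n Np Nd hNd B D hB hD Z₂ hZ₂n hβZ₂ s s'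
    hupd
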